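/- arXiv:1409.5314 — 5 statements merged into one kernel-verified Lean document; each statement's English description precedes it below -/
import Mathlib

section
/- Let n ≥ 2 be an even integer. Then B_n + Σ_{p prime, (p-1) | n} 1/p is an integer, where B_n denotes the n-th Bernoulli number. -/
theorem von_staudt_clausen_general (n : ℕ) (he : Even n) :
    ∃ z : ℤ, bernoulli n +
        ∑ p ∈ (Finset.range (n + 2)).filter (fun p => Nat.Prime p ∧ (p - 1) ∣ n),
          ((p : ℚ))⁻¹ = (z : ℚ) := by
  obtain ⟨k, rfl⟩ := he.two_dvd
  obtain ⟨z, hz⟩ := Bernoulli.vonStaudt_clausen k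
  exact ⟨z, by simpa only [one_div] using hz.symm⟩

/-- von Staudt–Clausen: for even `n ≥ 2`, `B_n + ∑_{(p-1) ∣ n, p prime} 1/p ∈ ℤ`. -/
theorem von_staudt_clausen (n : ℕ) (h2 : 2 ≤ n) (he : Even n) :
    ∃ z : ℤ, bernoulli n +
        ∑ p ∈ (Finset.range (n + 2)).filter (fun p => Nat.Prime p ∧ (p - 1) ∣ n),
          ((p : ℚ))⁻¹ = (z : ℚ) :=
  von_staudt_clausen_general n he
end

section
/- Let p be an odd prime and define the polynomial e_1(X) = (1/p!) · Π_{a=1}^{(p-1)/2} (X² - a²) ∈ ℚ[X]. Then for every x ∈ ℤ_p^* (p-adic unit), e_1(x) ∈ ℤ_p. -/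
/-!
Since `p` is odd, every nonzero residue `u` mod `p` agrees up to sign with some `a` in
`[1, (p - 1) / 2]`, so `x² - a²` is divisible by `p` for a unit `x` with `x ≡ u`. Hence the
product has norm at most `1 / p`, while `v_p(p!) = 1`, so dividing by `p!` stays in `ℤ_p`.
-/

open Polynomial

theorem ZMod.exists_mem_Icc_sq_eq_sq {n : ℕ} [NeZero n] {u : ZMod n} (hu : u ≠ 0) :
    ∃ a ∈ Finset.Icc 1 (n / 2), (a : ZMod n) ^ 2 = u ^ 2 := by
  refine ⟨u.valMinAbs.natAbs, Finset.mem_Icc.mpr ⟨?_, u.natAbs_valMinAbs_le⟩, ?_⟩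
  · simpa [Nat.one_le_iff_ne_zero] using hu
  · rw [natCast_natAbs_valMinAbs]
    split_ifs <;> ring

namespace PadicInt

variable {p : ℕ} [Fact p.Prime]

theorem coe_prod {α : Type*} (s : Finset α) (f : α → ℤ_[p]) :
    ((∏ z ∈ s, f z : ℤ_[p]) : ℚ_[p]) = ∏ z ∈ s, (f z : ℚ_[p]) :=
  map_prod Coe.ringHom f s

theorem norm_le_inv_p_of_toZMod_eq_zero {y : ℤ_[p]} (hy : toZMod y = 0) :
    ‖y‖ ≤ (p : ℝ)⁻¹ := by
  have hlt : ‖y‖ < 1 := by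
    rwa [← RingHom.mem_ker, ker_toZMod, IsLocalRing.mem_maximalIdeal, mem_nonunits] at hy
  simpa using (norm_le_pow_iff_norm_lt_pow_add_one y (-1)).mpr (by simpa using hlt)

theorem norm_prod_sq_sub_sq_le_inv_p {x : ℤ_[p]} (hx : IsUnit x) :
    ‖∏ a ∈ Finset.Icc 1 (p / 2), (x ^ 2 - (a : ℤ_[p]) ^ 2)‖ ≤ (p : ℝ)⁻¹ := by
  obtain ⟨a, ha, hsq⟩ := ZMod.exists_mem_Icc_sq_eq_sq (hx.map toZMod).ne_zero
  refine norm_le_inv_p_of_toZMod_eq_zero ?_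
  rw [map_prod]
  exact Finset.prod_eq_zero ha (by simp [hsq])

end PadicInt

theorem Padic.norm_factorial_self (p : ℕ) [hp : Fact p.Prime] :
    ‖(p.factorial : ℚ_[p])‖ = (p : ℝ)⁻¹ := by
  have hcop : p.Coprime (p - 1).factorial :=
    hp.out.coprime_factorial_of_lt (Nat.sub_lt hp.out.pos one_pos)
  rw [← Nat.mul_factorial_pred hp.out.ne_zero, Nat.cast_mul, norm_mul, norm_p,
    norm_natCast_eq_one_iff.mpr hcop, mul_one]

/-- For an odd prime `p`, the polynomial `e₁(X) = (1/p!)·∏_{a=1}^{(p-1)/2} (X² - a²)`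
maps `p`-adic units to `p`-adic integers. -/
theorem e_one_maps_units_to_integers (p : ℕ) [Fact p.Prime] (hp : p ≠ 2)
    (x : ℤ_[p]) (hx : IsUnit x) :
    ‖Polynomial.aeval ((x : ℚ_[p]))
        (Polynomial.C (((Nat.factorial p : ℚ))⁻¹) *
          ∏ a ∈ Finset.Icc 1 ((p - 1) / 2),
            (Polynomial.X ^ 2 - Polynomial.C ((a : ℚ)) ^ 2))‖ ≤ 1 := by
  have hhalf : (p - 1) / 2 = p / 2 := by
    have := Nat.odd_iff.mp ((Fact.out : p.Prime).odd_of_ne_two hp)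
    omega
  have heval : Polynomial.aeval (x : ℚ_[p])
        (C ((p.factorial : ℚ)⁻¹) * ∏ a ∈ Finset.Icc 1 ((p - 1) / 2), (X ^ 2 - C (a : ℚ) ^ 2)) =
      (p.factorial : ℚ_[p])⁻¹ * ((∏ a ∈ Finset.Icc 1 (p / 2), (x ^ 2 - (a : ℤ_[p]) ^ 2) : ℤ_[p])
        : ℚ_[p]) := by
    simp [hhalf, map_prod, PadicInt.coe_prod]
  rw [heval, norm_mul, norm_inv, Padic.norm_factorial_self, inv_inv,
    PadicInt.padic_norm_e_of_padicInt]
  calc (p : ℝ) * ‖∏ a ∈ Finset.Icc 1 (p / 2), (x ^ 2 - (a : ℤ_[p]) ^ 2)‖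
      ≤ p * (p : ℝ)⁻¹ := by gcongr; exact PadicInt.norm_prod_sq_sub_sq_le_inv_p hx
    _ = 1 := mul_inv_cancel₀ (by exact_mod_cast (Fact.out : p.Prime).ne_zero)
end

section
/- Let p be a prime and n ≥ 1. The map ψ_n : ℤ/p^nℤ → 𝔽_p^n sending x to the tuple (C(x + ⌊p^j/2⌋, p^j) mod p)_{0 ≤ j ≤ n-1} is well-defined and bijective. -/
/-!
By Lucas's theorem `C(a, p^j) ≡ ⌊a / p^j⌋ (mod p)`, so the `j`-th coordinate of `ψ_n(x)` is the
`j`-th base-`p` digit of `x + c_j`, where `c_j = ⌊p^j / 2⌋`. Knowing `x mod p^j`, that digit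
determines `x mod p^(j+1)` whatever the shift `c_j` is, so by induction `ψ_n(x) = ψ_n(y)` exactly
when `x ≡ y (mod p^n)`. This gives well-definedness and injectivity at once; both sides have `p^n`
elements.
-/

theorem Nat.cast_choose_prime_pow {p : ℕ} [Fact p.Prime] (k a : ℕ) :
    (a.choose (p ^ k) : ZMod p) = (a / p ^ k : ℕ) := by
  induction k generalizing a with
  | zero => simp
  | succ k ih =>
    have hp := (Fact.out : p.Prime).pos
    rw [(ZMod.natCast_eq_natCast_iff _ _ _).mpr Choose.choose_modEq_choose_mod_mul_choose_div_nat,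
      pow_succ, Nat.mul_mod_left, Nat.mul_div_cancel _ hp, Nat.choose_zero_right, Nat.cast_mul,
      Nat.cast_one, one_mul, ih, Nat.div_div_eq_div_mul, mul_comm]

theorem Nat.modEq_mul_iff_modEq_and_div_mod {a b m k : ℕ} :
    a ≡ b [MOD m * k] ↔ a ≡ b [MOD m] ∧ a / m % k = b / m % k := by
  refine ⟨fun h => ⟨h.of_mul_right k, ?_⟩, fun ⟨hm, hk⟩ => ?_⟩
  · rw [← Nat.mod_mul_right_div_self, h, Nat.mod_mul_right_div_self]
  · unfold Nat.ModEq at *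
    rw [Nat.mod_mul, Nat.mod_mul, hm, hk]

theorem Nat.modEq_pow_iff_forall_shifted_digit_eq {p n a b : ℕ} (c : ℕ → ℕ) :
    a ≡ b [MOD p ^ n] ↔ ∀ j < n, (a + c j) / p ^ j % p = (b + c j) / p ^ j % p := by
  induction n with
  | zero => simp [Nat.modEq_one]
  | succ n ih =>
    rw [← Nat.ModEq.add_iff_right (Nat.ModEq.refl (c n)), pow_succ,
      Nat.modEq_mul_iff_modEq_and_div_mod, Nat.ModEq.add_iff_right (Nat.ModEq.refl (c n)), ih,
      Nat.forall_lt_succ_right]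

theorem cast_choose_prime_pow_shift_eq_iff_modEq {p : ℕ} [Fact p.Prime] (n : ℕ) (c : ℕ → ℕ)
    (x y : ℕ) :
    (fun j : Fin n => (Nat.choose (x + c j) (p ^ (j : ℕ)) : ZMod p)) =
        (fun j : Fin n => (Nat.choose (y + c j) (p ^ (j : ℕ)) : ZMod p)) ↔
      x ≡ y [MOD p ^ n] := by
  simp only [funext_iff, Fin.forall_iff, Nat.cast_choose_prime_pow, ZMod.natCast_eq_natCast_iff']
  exact (Nat.modEq_pow_iff_forall_shifted_digit_eq c).symm

theorem psi_n_bijective_general (p : ℕ) (hp : Nat.Prime p) (n : ℕ) :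
    (∀ x y : ℕ, x ≡ y [MOD p ^ n] →
        (fun j : Fin n => ((Nat.choose (x + p ^ (j : ℕ) / 2) (p ^ (j : ℕ)) : ZMod p))) =
          (fun j : Fin n => ((Nat.choose (y + p ^ (j : ℕ) / 2) (p ^ (j : ℕ)) : ZMod p)))) ∧
    Function.Bijective (fun (x : ZMod (p ^ n)) (j : Fin n) =>
      ((Nat.choose (x.val + p ^ (j : ℕ) / 2) (p ^ (j : ℕ)) : ZMod p))) := by
  have : Fact p.Prime := ⟨hp⟩
  have : NeZero (p ^ n) := ⟨pow_ne_zero n hp.ne_zero⟩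
  have psi_eq_iff := cast_choose_prime_pow_shift_eq_iff_modEq (p := p) n (fun j => p ^ j / 2)
  refine ⟨fun x y h => (psi_eq_iff x y).mpr h,
    (Fintype.bijective_iff_injective_and_card _).mpr ⟨fun x y h => ?_, by simp [ZMod.card]⟩⟩
  rw [← ZMod.natCast_zmod_val x, ← ZMod.natCast_zmod_val y, ZMod.natCast_eq_natCast_iff]
  exact (psi_eq_iff x.val y.val).mp h

/-- The map `ψ_n : ℤ/p^nℤ → 𝔽_p^n`, `x ↦ (C(x + ⌊p^j/2⌋, p^j) mod p)_{0 ≤ j ≤ n-1}`,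
is well defined (depends only on `x` mod `p^n`) and bijective. -/
theorem psi_n_bijective (p : ℕ) (hp : Nat.Prime p) (n : ℕ) (hn : 1 ≤ n) :
    (∀ x y : ℕ, x ≡ y [MOD p ^ n] →
        (fun j : Fin n => ((Nat.choose (x + p ^ (j : ℕ) / 2) (p ^ (j : ℕ)) : ZMod p))) =
          (fun j : Fin n => ((Nat.choose (y + p ^ (j : ℕ) / 2) (p ^ (j : ℕ)) : ZMod p)))) ∧
    Function.Bijective (fun (x : ZMod (p ^ n)) (j : Fin n) =>
      ((Nat.choose (x.val + p ^ (j : ℕ) / 2) (p ^ (j : ℕ)) : ZMod p))) :=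
  psi_n_bijective_general p hp n
end

section
/- Let p be a prime, G = ℤ_p^*/{±1} and c a topological generator of G. Let f, g : G → ℤ_p be continuous functions and r ≥ 0 an integer such that p^r·f(x) = g(x) - g(c·x) for all x ∈ G. Then there exists a continuous function h : G → ℤ_p with f(x) = h(x) - h(c·x) for all x ∈ G. -/
/-!
Reducing modulo `p^r` turns `g` into a continuous map `G → ℤ/p^r` that is invariant under
translation by `c`, hence by the dense subgroup generated by `c`, hence constant. So
`g - g 1 = p^r • h` for a function `h`, continuous because multiplication by `p^r` is a closed
embedding of the compact space `ℤ_p` into itself; cancelling `p^r` from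
`p^r f = g - g∘(c·) = p^r (h - h∘(c·))` gives the claim.
-/

/-- `G = ℤ_p^*/{±1}`, the quotient of the `p`-adic units by `±1`. -/
abbrev GG (p : ℕ) [Fact p.Prime] :=
  (ℤ_[p])ˣ ⧸ Subgroup.zpowers (-1 : (ℤ_[p])ˣ)

theorem apply_zpow_mul_eq_of_apply_mul_eq {G X : Type*} [Group G] {φ : G → X} {c : G}
    (hφ : ∀ x, φ (c * x) = φ x) (n : ℤ) (x : G) : φ (c ^ n * x) = φ x := by
  refine zpow_induction_left (P := fun a ↦ ∀ x, φ (a * x) = φ x) (by simp) ?_ ?_ n x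
  · intro a ha x
    rw [mul_assoc, hφ, ha]
  · intro a ha x
    rw [← hφ, ← mul_assoc, ← mul_assoc, mul_inv_cancel, one_mul, ha]

theorem Continuous.apply_eq_of_dense_zpowers {G X : Type*} [Group G] [TopologicalSpace G]
    [ContinuousMul G] [TopologicalSpace X] [T2Space X] {c : G}
    (hc : Dense (Subgroup.zpowers c : Set G)) {φ : G → X} (hφc : Continuous φ)
    (hφ : ∀ x, φ (c * x) = φ x) (x y : G) : φ x = φ y := by
  have : (fun a ↦ φ (a * y)) = fun _ ↦ φ y :=
    Continuous.ext_on hc (hφc.comp (continuous_mul_const y)) continuous_const <| by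
      rintro _ ⟨n, rfl⟩
      exact apply_zpow_mul_eq_of_apply_mul_eq hφ n y
  simpa using congrFun this (x * y⁻¹)

theorem ContinuousMap.exists_eq_mul_of_forall_dvd {X R : Type*} [TopologicalSpace X]
    [MonoidWithZero R] [IsLeftCancelMulZero R] [TopologicalSpace R] [ContinuousMul R]
    [CompactSpace R] [T2Space R] {a : R} (ha : a ≠ 0) (u : C(X, R)) (hu : ∀ x, a ∣ u x) :
    ∃ k : C(X, R), ∀ x, u x = a * k x := by
  choose k hk using hu
  have hmul : Topology.IsClosedEmbedding (a * ·) :=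
    (continuous_const_mul a).isClosedEmbedding fun _ _ ↦ mul_left_cancel₀ ha
  refine ⟨⟨k, ?_⟩, hk⟩
  rw [hmul.continuous_iff]
  simpa only [Function.comp_def, ← hk] using u.continuous

namespace PadicInt

variable {p : ℕ} [Fact p.Prime]

theorem continuous_toZModPow (n : ℕ) : Continuous (toZModPow (p := p) n) := by
  refine continuous_of_continuousAt_zero (toZModPow n) ?_
  rw [ContinuousAt, map_zero, nhds_discrete (ZMod _), Filter.tendsto_pure]
  have hp : (0 : ℝ) < p := Nat.cast_pos.mpr (Fact.out : p.Prime).pos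
  filter_upwards [Metric.closedBall_mem_nhds (0 : ℤ_[p]) (zpow_pos hp (-n))] with x hx
  rw [← RingHom.mem_ker, ker_toZModPow, ← norm_le_pow_iff_mem_span_pow]
  simpa using hx

theorem pow_dvd_sub_iff_toZModPow_eq (n : ℕ) (x y : ℤ_[p]) :
    (p : ℤ_[p]) ^ n ∣ x - y ↔ toZModPow n x = toZModPow n y := by
  rw [← Ideal.mem_span_singleton, ← ker_toZModPow, RingHom.mem_ker, map_sub, sub_eq_zero]

end PadicInt

/-- The cokernel of `id - c^*` on `C(G, ℤ_p)` is torsion free: if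
`p^r · f = g - g∘(c·)` then `f = h - h∘(c·)` for some continuous `h`. -/
theorem coker_torsion_free (p : ℕ) [Fact p.Prime] (c : GG p)
    (hc : Dense ((Subgroup.zpowers c : Subgroup (GG p)) : Set (GG p)))
    (f g : C(GG p, ℤ_[p])) (r : ℕ)
    (hfg : ∀ x, (p : ℤ_[p]) ^ r * f x = g x - g (c * x)) :
    ∃ h : C(GG p, ℤ_[p]), ∀ x, f x = h x - h (c * x) := by
  have hpr : (p : ℤ_[p]) ^ r ≠ 0 :=
    pow_ne_zero _ (Nat.cast_ne_zero.mpr (Fact.out : p.Prime).ne_zero)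
  have hinv (x : GG p) : PadicInt.toZModPow r (g (c * x)) = PadicInt.toZModPow r (g x) :=
    ((PadicInt.pow_dvd_sub_iff_toZModPow_eq r _ _).mp ⟨f x, (hfg x).symm⟩).symm
  have hdvd (x : GG p) : (p : ℤ_[p]) ^ r ∣ (g - ContinuousMap.const (GG p) (g 1)) x :=
    (PadicInt.pow_dvd_sub_iff_toZModPow_eq r _ _).mpr <|
      ((PadicInt.continuous_toZModPow r).comp g.continuous).apply_eq_of_dense_zpowers hc hinv x 1
  obtain ⟨h, hh⟩ := ContinuousMap.exists_eq_mul_of_forall_dvd hpr _ hdvd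
  simp only [ContinuousMap.sub_apply, ContinuousMap.const_apply] at hh
  refine ⟨h, fun x ↦ mul_left_cancel₀ hpr ?_⟩
  rw [hfg, mul_sub, ← hh, ← hh]
  ring
end

section
/- Let p be a prime, G a profinite abelian group, and Λ_p(G) = lim_← ℤ_p[G/H] its completed group algebra, the inverse limit over open subgroups H ⊆ G. Then the map λ : Meas(G, ℤ_p) → Λ_p(G) sending a measure μ to the compatible family (Σ_{x ∈ G/H} μ(ε_x)·x)_H, where ε_x is the characteristic function of the coset x, is an isomorphism of ℤ_p-algebras, where Meas(G, ℤ_p) carries the convolution product. -/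
/-!
A measure `μ` is recovered from its values `μ(ε_x)` on coset indicators. Every continuous
`f : G → ℤ_p` is congruent mod `p^n` to a function constant on the cosets of some open subgroup
(uniform continuity on the compact, totally disconnected group `G`), and a `ℤ_p`-linear functional
sends functions divisible by `p^n` to multiples of `p^n`. Hence `μ f` is the `p`-adic limit of the
Riemann sums `∑_{x ∈ G/H} μ(ε_x) f(x̃)` as `H` shrinks, which gives injectivity. For a compatible
family `y` the Riemann sums `∑_x y_H(x) f(x̃)` are Cauchy for the same reason, and their limit is a
measure mapping to `y`. Multiplicativity is a finite computation at each level `H`, because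
`x ↦ ν(ε_z(x ·))` is the coset function `x ↦ ν(ε_{x⁻¹z})`.
-/

open Filter Topology
open scoped Classical

namespace PadicInt

variable {p : ℕ} [Fact p.Prime]

theorem norm_le_pow_iff_pow_dvd (x : ℤ_[p]) (n : ℕ) :
    ‖x‖ ≤ (p : ℝ) ^ (-n : ℤ) ↔ (p : ℤ_[p]) ^ n ∣ x := by
  rw [norm_le_pow_iff_mem_span_pow, Ideal.mem_span_singleton]

theorem pow_dvd_of_norm_lt {x : ℤ_[p]} {n : ℕ} (hx : ‖x‖ < (p : ℝ) ^ (-n + 1 : ℤ)) :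
    (p : ℤ_[p]) ^ n ∣ x := by
  rwa [← norm_le_pow_iff_pow_dvd, norm_le_pow_iff_norm_lt_pow_add_one]

theorem tendsto_of_forall_pow_dvd_sub {ι : Type*} {l : Filter ι} {x : ι → ℤ_[p]} {a : ℤ_[p]}
    (h : ∀ n : ℕ, ∀ᶠ i in l, (p : ℤ_[p]) ^ n ∣ x i - a) : Tendsto x l (𝓝 a) := by
  refine Metric.tendsto_nhds.2 fun ε hε => ?_
  obtain ⟨n, hn⟩ := exists_pow_neg_lt p hε
  filter_upwards [h n] with i hi
  rw [dist_eq_norm]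
  exact ((norm_le_pow_iff_pow_dvd _ n).2 hi).trans_lt hn

theorem exists_tendsto_of_forall_pow_dvd_sub {ι : Type*} {l : Filter ι} [l.NeBot]
    {x : ι → ℤ_[p]} (h : ∀ n : ℕ, ∃ s ∈ l, ∀ i ∈ s, ∀ j ∈ s, (p : ℤ_[p]) ^ n ∣ x i - x j) :
    ∃ a, Tendsto x l (𝓝 a) := by
  refine cauchy_map_iff_exists_tendsto.1 (Metric.cauchy_iff.2 ⟨inferInstance, fun ε hε => ?_⟩)
  obtain ⟨n, hn⟩ := exists_pow_neg_lt p hε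
  obtain ⟨s, hs, hdvd⟩ := h n
  refine ⟨x '' s, image_mem_map hs, ?_⟩
  rintro _ ⟨i, hi, rfl⟩ _ ⟨j, hj, rfl⟩
  rw [dist_eq_norm]
  exact ((norm_le_pow_iff_pow_dvd _ n).2 (hdvd i hi j hj)).trans_lt hn

theorem _root_.ContinuousMap.exists_eq_smul_of_forall_dvd {X : Type*} [TopologicalSpace X]
    {c : ℤ_[p]} {f : C(X, ℤ_[p])} (hf : ∀ x, c ∣ f x) : ∃ g : C(X, ℤ_[p]), f = c • g := by
  rcases eq_or_ne c 0 with rfl | hc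
  · exact ⟨0, by ext x; simpa using hf x⟩
  choose g hg using hf
  refine ⟨⟨g, ?_⟩, ContinuousMap.ext hg⟩
  have hcoe : ((↑) : ℤ_[p] → ℚ_[p]) ∘ g = fun x => (f x : ℚ_[p]) / c := by
    funext x
    change (g x : ℚ_[p]) = (f x : ℚ_[p]) / c
    rw [hg x, coe_mul, mul_div_cancel_left₀ _ (by rwa [Ne, coe_eq_zero])]
  exact continuous_induced_rng.2 (hcoe ▸ (continuous_subtype_val.comp f.continuous).div_const _)

theorem _root_.LinearMap.dvd_apply_of_forall_dvd {X : Type*} [TopologicalSpace X]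
    (μ : C(X, ℤ_[p]) →ₗ[ℤ_[p]] ℤ_[p]) {c : ℤ_[p]} {f : C(X, ℤ_[p])} (hf : ∀ x, c ∣ f x) :
    c ∣ μ f := by
  obtain ⟨g, rfl⟩ := ContinuousMap.exists_eq_smul_of_forall_dvd hf
  exact ⟨μ g, by rw [map_smul, smul_eq_mul]⟩

end PadicInt

theorem Continuous.exists_openSubgroup_dist_lt {G X : Type*} [Group G] [TopologicalSpace G]
    [IsTopologicalGroup G] [CompactSpace G] [TotallyDisconnectedSpace G] [PseudoMetricSpace X]
    {f : G → X} (hf : Continuous f) {ε : ℝ} (hε : 0 < ε) :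
    ∃ K : OpenSubgroup G, ∀ g g' : G, (g : G ⧸ K.toSubgroup) = g' → dist (f g) (f g') < ε := by
  have hopen : IsOpen {q : G × G | dist (f q.1) (f (q.1 * q.2)) < ε} :=
    isOpen_lt (by fun_prop) continuous_const
  obtain ⟨U, V, -, hV, hU, hV1, hsub⟩ :=
    generalized_tube_lemma isCompact_univ (isCompact_singleton (x := (1 : G))) hopen
      (fun q ⟨_, hq⟩ => by simpa [Set.mem_singleton_iff.1 hq] using hε)
  obtain ⟨K, hK⟩ := ProfiniteGrp.exist_openNormalSubgroup_sub_open_nhds_of_one hV (hV1 rfl)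
  refine ⟨K.toOpenSubgroup, fun g g' hgg' => ?_⟩
  have hk : g⁻¹ * g' ∈ V := hK (QuotientGroup.eq.1 hgg')
  simpa using hsub (show (g, g⁻¹ * g') ∈ U ×ˢ V from ⟨hU trivial, hk⟩)

namespace OpenSubgroup

variable {G : Type*} [CommGroup G] [TopologicalSpace G] {H K : OpenSubgroup G}

def quotientMapOfLE (h : H ≤ K) : G ⧸ H.toSubgroup →* G ⧸ K.toSubgroup :=
  QuotientGroup.map H.toSubgroup K.toSubgroup (MonoidHom.id G) fun _ hg => h hg

theorem mk_out_eq_quotientMapOfLE (h : H ≤ K) (a : G ⧸ H.toSubgroup) :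
    (a.out : G ⧸ K.toSubgroup) = quotientMapOfLE h a := by
  conv_rhs => rw [← QuotientGroup.out_eq' a]
  rfl

end OpenSubgroup

namespace Iwasawa

open OpenSubgroup

variable {G : Type*} [CommGroup G] [TopologicalSpace G] (R : Type*) [CommRing R]

def IsCompatible (y : ∀ H : OpenSubgroup G, MonoidAlgebra R (G ⧸ H.toSubgroup)) : Prop :=
  ∀ (H K : OpenSubgroup G) (h : H ≤ K),
    Finsupp.mapDomain (quotientMapOfLE h) (y H).coeff = (y K).coeff

variable [IsTopologicalGroup G]

section Finite

variable [CompactSpace G]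

noncomputable instance (H : OpenSubgroup G) : Fintype (G ⧸ H.toSubgroup) :=
  Fintype.ofFinite _

variable {R}

theorem IsCompatible.sum_coeff_mul {y : ∀ H : OpenSubgroup G, MonoidAlgebra R (G ⧸ H.toSubgroup)}
    (hy : IsCompatible R y) {H K : OpenSubgroup G} (h : H ≤ K) (φ : G ⧸ K.toSubgroup → R) :
    ∑ b, (y K).coeff b * φ b = ∑ a, (y H).coeff a * φ (quotientMapOfLE h a) := by
  calc ∑ b, (y K).coeff b * φ b = (y K).coeff.sum fun b c => c * φ b :=
        (Finsupp.sum_fintype (y K).coeff (fun b c => c * φ b) fun _ => zero_mul _).symm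
    _ = (y H).coeff.sum fun a c => c * φ (quotientMapOfLE h a) := by
        rw [← hy H K h, Finsupp.sum_mapDomain_index (by simp) (by simp [add_mul])]
    _ = ∑ a, (y H).coeff a * φ (quotientMapOfLE h a) :=
        Finsupp.sum_fintype _ _ fun _ => zero_mul _

end Finite

section Measures

variable [TopologicalSpace R]

def ofQuotient {X : Type*} [TopologicalSpace X] (H : OpenSubgroup G) (φ : G ⧸ H.toSubgroup → X) :
    C(G, X) :=
  ⟨fun g => φ g, continuous_of_discreteTopology.comp continuous_quotient_mk'⟩

@[simp]
theorem ofQuotient_apply {X : Type*} [TopologicalSpace X] (H : OpenSubgroup G)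
    (φ : G ⧸ H.toSubgroup → X) (g : G) : ofQuotient H φ g = φ g :=
  rfl

noncomputable def cosetIndicator (H : OpenSubgroup G) (a : G ⧸ H.toSubgroup) : C(G, R) :=
  ofQuotient H fun x => if x = a then 1 else 0

variable {R}

theorem cosetIndicator_comp_mulLeft (H : OpenSubgroup G) (a : G ⧸ H.toSubgroup) (x : G) :
    (cosetIndicator R H a).comp (ContinuousMap.mulLeft x) =
      cosetIndicator R H ((x : G ⧸ H.toSubgroup)⁻¹ * a) := by
  ext g
  exact if_congr (by simp [eq_inv_mul_iff_mul_eq]) rfl rfl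

variable [IsTopologicalRing R] [CompactSpace G]

theorem ofQuotient_eq_sum (H : OpenSubgroup G) (φ : G ⧸ H.toSubgroup → R) :
    ofQuotient H φ = ∑ a, φ a • cosetIndicator R H a := by
  ext g
  simp [cosetIndicator]

theorem map_ofQuotient (μ : C(G, R) →ₗ[R] R) (H : OpenSubgroup G) (φ : G ⧸ H.toSubgroup → R) :
    μ (ofQuotient H φ) = ∑ a, φ a * μ (cosetIndicator R H a) := by
  simp [ofQuotient_eq_sum]

variable (R) in
noncomputable def toGroupAlgebra :
    (C(G, R) →ₗ[R] R) →ₗ[R] ∀ H : OpenSubgroup G, MonoidAlgebra R (G ⧸ H.toSubgroup) where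
  toFun μ H := .ofCoeff (Finsupp.equivFunOnFinite.symm fun a => μ (cosetIndicator R H a))
  map_add' μ ν := by ext; rfl
  map_smul' c μ := by ext; rfl

@[simp]
theorem toGroupAlgebra_coeff (μ : C(G, R) →ₗ[R] R) (H : OpenSubgroup G) (a : G ⧸ H.toSubgroup) :
    (toGroupAlgebra R μ H).coeff a = μ (cosetIndicator R H a) :=
  rfl

theorem toGroupAlgebra_eq_mul_of_convolution {μ ν κ : C(G, R) →ₗ[R] R}
    (hκ : ∀ f g : C(G, R), (∀ x, g x = ν (f.comp (ContinuousMap.mulLeft x))) → κ f = μ g) :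
    toGroupAlgebra R κ = toGroupAlgebra R μ * toGroupAlgebra R ν := by
  ext H z
  have hg : ∀ x : G, ofQuotient H (fun a => ν (cosetIndicator R H (a⁻¹ * z))) x =
      ν ((cosetIndicator R H z).comp (ContinuousMap.mulLeft x)) := by
    intro x
    rw [cosetIndicator_comp_mulLeft, ofQuotient_apply]
  rw [toGroupAlgebra_coeff, hκ _ _ hg, map_ofQuotient, Pi.mul_apply,
    MonoidAlgebra.coeff_mul_apply_left, Finsupp.sum_fintype _ _ (by simp)]
  simp [mul_comm]

theorem isCompatible_toGroupAlgebra (μ : C(G, R) →ₗ[R] R) :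
    IsCompatible R (toGroupAlgebra R μ) := by
  intro H K h
  ext b
  have hb : cosetIndicator R K b =
      ofQuotient H fun a => if quotientMapOfLE h a = b then 1 else 0 := by
    ext g; rfl
  rw [toGroupAlgebra_coeff, hb, map_ofQuotient, Finsupp.mapDomain, Finsupp.sum_apply,
    Finsupp.sum_fintype _ _ (by simp)]
  simp [Finsupp.single_apply, eq_comm]

variable (y : ∀ H : OpenSubgroup G, MonoidAlgebra R (G ⧸ H.toSubgroup))

noncomputable def riemannSum (H : OpenSubgroup G) : C(G, R) →ₗ[R] R where
  toFun f := ∑ a, (y H).coeff a * f a.out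
  map_add' f g := by simp [mul_add, Finset.sum_add_distrib]
  map_smul' c f := by simp [Finset.mul_sum, mul_left_comm]

theorem riemannSum_apply (H : OpenSubgroup G) (f : C(G, R)) :
    riemannSum y H f = ∑ a, (y H).coeff a * f a.out :=
  rfl

theorem riemannSum_toGroupAlgebra (μ : C(G, R) →ₗ[R] R) (H : OpenSubgroup G) (f : C(G, R)) :
    riemannSum (toGroupAlgebra R μ) H f = μ (ofQuotient H fun a => f a.out) := by
  simp [riemannSum_apply, map_ofQuotient, mul_comm]

variable {y}

theorem IsCompatible.riemannSum_cosetIndicator (hy : IsCompatible R y) {H K : OpenSubgroup G}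
    (h : H ≤ K) (b : G ⧸ K.toSubgroup) :
    riemannSum y H (cosetIndicator R K b) = (y K).coeff b := by
  calc riemannSum y H (cosetIndicator R K b)
      = ∑ a, (y H).coeff a * if quotientMapOfLE h a = b then 1 else 0 := by
        simp [riemannSum_apply, cosetIndicator, mk_out_eq_quotientMapOfLE h]
    _ = ∑ b', (y K).coeff b' * if b' = b then 1 else 0 :=
        (hy.sum_coeff_mul h fun b' => if b' = b then 1 else 0).symm
    _ = (y K).coeff b := by simp

theorem IsCompatible.dvd_riemannSum_sub (hy : IsCompatible R y) {H K : OpenSubgroup G}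
    (h : H ≤ K) {c : R} {f : C(G, R)}
    (hf : ∀ g g' : G, (g : G ⧸ K.toSubgroup) = g' → c ∣ f g - f g') :
    c ∣ riemannSum y H f - riemannSum y K f := by
  rw [riemannSum_apply, riemannSum_apply, hy.sum_coeff_mul h, ← Finset.sum_sub_distrib]
  refine Finset.dvd_sum fun a _ => ?_
  rw [← mul_sub]
  refine dvd_mul_of_dvd_right (hf _ _ ?_) _
  rw [mk_out_eq_quotientMapOfLE h, QuotientGroup.out_eq']

end Measures

section Padic

variable {p : ℕ} [Fact p.Prime] [CompactSpace G] [TotallyDisconnectedSpace G]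

theorem exists_openSubgroup_pow_dvd_sub (f : C(G, ℤ_[p])) (n : ℕ) :
    ∃ K : OpenSubgroup G, ∀ g g' : G, (g : G ⧸ K.toSubgroup) = g' →
      (p : ℤ_[p]) ^ n ∣ f g - f g' := by
  obtain ⟨K, hK⟩ := f.continuous.exists_openSubgroup_dist_lt
    (ε := (p : ℝ) ^ (-n + 1 : ℤ)) (zpow_pos (by exact_mod_cast (Fact.out : p.Prime).pos) _)
  exact ⟨K, fun g g' h => PadicInt.pow_dvd_of_norm_lt (by simpa [dist_eq_norm] using hK g g' h)⟩

theorem tendsto_riemannSum_toGroupAlgebra (μ : C(G, ℤ_[p]) →ₗ[ℤ_[p]] ℤ_[p]) (f : C(G, ℤ_[p])) :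
    Tendsto (fun H => riemannSum (toGroupAlgebra ℤ_[p] μ) H f) atBot (𝓝 (μ f)) := by
  refine PadicInt.tendsto_of_forall_pow_dvd_sub fun n => ?_
  obtain ⟨K, hK⟩ := exists_openSubgroup_pow_dvd_sub f n
  filter_upwards [eventually_le_atBot K] with H hH
  rw [riemannSum_toGroupAlgebra, ← map_sub]
  refine μ.dvd_apply_of_forall_dvd fun g => hK _ _ ?_
  rw [mk_out_eq_quotientMapOfLE hH]
  rfl

theorem toGroupAlgebra_injective :
    Function.Injective (toGroupAlgebra ℤ_[p] (G := G)) := by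
  intro μ ν h
  ext f
  exact tendsto_nhds_unique (tendsto_riemannSum_toGroupAlgebra μ f)
    (h ▸ tendsto_riemannSum_toGroupAlgebra ν f)

theorem IsCompatible.exists_tendsto_riemannSum
    {y : ∀ H : OpenSubgroup G, MonoidAlgebra ℤ_[p] (G ⧸ H.toSubgroup)}
    (hy : IsCompatible ℤ_[p] y) (f : C(G, ℤ_[p])) :
    ∃ a, Tendsto (fun H => riemannSum y H f) atBot (𝓝 a) := by
  refine PadicInt.exists_tendsto_of_forall_pow_dvd_sub fun n => ?_
  obtain ⟨K, hK⟩ := exists_openSubgroup_pow_dvd_sub f n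
  refine ⟨Set.Iic K, Iic_mem_atBot K, fun H hH H' hH' => ?_⟩
  simpa using dvd_sub (hy.dvd_riemannSum_sub hH hK) (hy.dvd_riemannSum_sub hH' hK)

theorem IsCompatible.exists_toGroupAlgebra_eq
    {y : ∀ H : OpenSubgroup G, MonoidAlgebra ℤ_[p] (G ⧸ H.toSubgroup)}
    (hy : IsCompatible ℤ_[p] y) : ∃ μ, toGroupAlgebra ℤ_[p] μ = y := by
  have hlim : ∀ f, Tendsto (fun H => riemannSum y H f) atBot
      (𝓝 (limUnder atBot fun H => riemannSum y H f)) :=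
    fun f => tendsto_nhds_limUnder (hy.exists_tendsto_riemannSum f)
  refine ⟨linearMapOfTendsto _ (riemannSum y) (tendsto_pi_nhds.2 hlim), ?_⟩
  ext H₀ a
  refine tendsto_nhds_unique (hlim _) (tendsto_const_nhds.congr' ?_)
  filter_upwards [eventually_le_atBot H₀] with H hH
  exact (hy.riemannSum_cosetIndicator hH a).symm

theorem isCompatible_iff_exists_toGroupAlgebra_eq
    (y : ∀ H : OpenSubgroup G, MonoidAlgebra ℤ_[p] (G ⧸ H.toSubgroup)) :
    IsCompatible ℤ_[p] y ↔ ∃ μ, toGroupAlgebra ℤ_[p] μ = y :=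
  ⟨IsCompatible.exists_toGroupAlgebra_eq, by rintro ⟨μ, rfl⟩; exact isCompatible_toGroupAlgebra μ⟩

end Padic

end Iwasawa

open Iwasawa

theorem measures_iso_completed_group_algebra_general (p : ℕ) [Fact p.Prime]
    (G : Type*) [CommGroup G] [TopologicalSpace G] [IsTopologicalGroup G]
    [CompactSpace G] [TotallyDisconnectedSpace G] :
    ∃ e : (C(G, ℤ_[p]) →ₗ[ℤ_[p]] ℤ_[p]) →
        (∀ H : OpenSubgroup G, MonoidAlgebra ℤ_[p] (G ⧸ H.toSubgroup)),
      -- defining formula: the coefficient of the coset `xc` in `e μ H` is `μ (ε_xc)`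
      (∀ (μ : C(G, ℤ_[p]) →ₗ[ℤ_[p]] ℤ_[p]) (H : OpenSubgroup G)
          (xc : G ⧸ H.toSubgroup) (f : C(G, ℤ_[p])),
          (∀ g : G, f g = if (QuotientGroup.mk g : G ⧸ H.toSubgroup) = xc then 1 else 0) →
          (e μ H).coeff xc = μ f) ∧
      -- bijectivity onto the compatible families, i.e. onto `Λ_p(G)`
      Function.Injective e ∧
      (∀ y : ∀ H : OpenSubgroup G, MonoidAlgebra ℤ_[p] (G ⧸ H.toSubgroup),
          (∀ (H₁ H₂ : OpenSubgroup G) (h : H₁ ≤ H₂),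
            Finsupp.mapDomain
              (QuotientGroup.map H₁.toSubgroup H₂.toSubgroup (MonoidHom.id G)
                (fun g hg => h hg)) (y H₁).coeff = (y H₂).coeff)
          ↔ ∃ μ, e μ = y) ∧
      -- `ℤ_p`-linearity
      (∀ μ ν, e (μ + ν) = e μ + e ν) ∧
      (∀ (a : ℤ_[p]) μ, e (a • μ) = a • e μ) ∧
      -- multiplicativity: convolution of measures goes to the product
      (∀ μ ν κ : C(G, ℤ_[p]) →ₗ[ℤ_[p]] ℤ_[p],
          (∀ f g : C(G, ℤ_[p]),
            (∀ x : G, g x = ν (f.comp ⟨fun y => x * y, continuous_mul_left x⟩)) →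
            κ f = μ g) →
          e κ = e μ * e ν) :=
  ⟨toGroupAlgebra ℤ_[p], fun μ _ _ _ hf => congrArg μ (ContinuousMap.ext hf).symm,
    toGroupAlgebra_injective, isCompatible_iff_exists_toGroupAlgebra_eq, map_add _, map_smul _,
    fun _ _ _ hκ => toGroupAlgebra_eq_mul_of_convolution hκ⟩

/-- The map `λ : Meas(G, ℤ_p) → Λ_p(G) = lim_← ℤ_p[G/H]`,
`μ ↦ (∑_{x ∈ G/H} μ(ε_x)·x)_H` (with `ε_x` the characteristic function of the coset
`x`), is an isomorphism of `ℤ_p`-algebras from measures (with convolution) onto the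
compatible families in `∏_H ℤ_p[G/H]` (the completed group algebra). -/
theorem measures_iso_completed_group_algebra (p : ℕ) [Fact p.Prime]
    (G : Type*) [CommGroup G] [TopologicalSpace G] [IsTopologicalGroup G]
    [CompactSpace G] [TotallyDisconnectedSpace G] [T2Space G] :
    ∃ e : (C(G, ℤ_[p]) →ₗ[ℤ_[p]] ℤ_[p]) →
        (∀ H : OpenSubgroup G, MonoidAlgebra ℤ_[p] (G ⧸ H.toSubgroup)),
      -- defining formula: the coefficient of the coset `xc` in `e μ H` is `μ (ε_xc)`
      (∀ (μ : C(G, ℤ_[p]) →ₗ[ℤ_[p]] ℤ_[p]) (H : OpenSubgroup G)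
          (xc : G ⧸ H.toSubgroup) (f : C(G, ℤ_[p])),
          (∀ g : G, f g = if (QuotientGroup.mk g : G ⧸ H.toSubgroup) = xc then 1 else 0) →
          (e μ H).coeff xc = μ f) ∧
      -- bijectivity onto the compatible families, i.e. onto `Λ_p(G)`
      Function.Injective e ∧
      (∀ y : ∀ H : OpenSubgroup G, MonoidAlgebra ℤ_[p] (G ⧸ H.toSubgroup),
          (∀ (H₁ H₂ : OpenSubgroup G) (h : H₁ ≤ H₂),
            Finsupp.mapDomain
              (QuotientGroup.map H₁.toSubgroup H₂.toSubgroup (MonoidHom.id G)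
                (fun g hg => h hg)) (y H₁).coeff = (y H₂).coeff)
          ↔ ∃ μ, e μ = y) ∧
      -- `ℤ_p`-linearity
      (∀ μ ν, e (μ + ν) = e μ + e ν) ∧
      (∀ (a : ℤ_[p]) μ, e (a • μ) = a • e μ) ∧
      -- multiplicativity: convolution of measures goes to the product
      (∀ μ ν κ : C(G, ℤ_[p]) →ₗ[ℤ_[p]] ℤ_[p],
          (∀ f g : C(G, ℤ_[p]),
            (∀ x : G, g x = ν (f.comp ⟨fun y => x * y, continuous_mul_left x⟩)) →
            κ f = μ g) →
          e κ = e μ * e ν) :=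
  measures_iso_completed_group_algebra_general p G
end
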